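/- For every a > 0 there exists R_a > 0 such that for all s ∈ (0,1) the integral ∫_{|x| ≥ R_a} K̃_s(|x|) e^{-a|x|²} dx is finite. -/

import Mathlib

/-!
On `{‖x‖ ≥ 1}` the integrand defining `K̃_s(‖x‖)` is dominated by the one at `r = 1`, so
`K̃_s(‖x‖) ≤ K̃_s(1)` there and one can take `R_a = 1`: the claim reduces to integrability of the
Gaussian. The value `K̃_s(1)` is finite because near `t = 0` the factor `exp(-r²/(4e²t))` beats
every power of `t`, while for `t ≥ 1` the integrand is `O(t^{-(s/2+1)})`, integrable as `s > 0`.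
-/

open Real MeasureTheory

/-- The radial majorant kernel K̃_s on ℝ^N. -/
noncomputable def radKernel (N : ℕ) (s r : ℝ) : ℝ :=
  ∫ t in Set.Ioi (0:ℝ),
    exp (-(exp t * r^2) / (2 * (exp (2 * t) - 1))) /
      (t ^ (s/2 + 1) * (1 - exp (-2 * t)) ^ ((N:ℝ)/2))

open Set

noncomputable def radKernelIntegrand (N : ℕ) (s r t : ℝ) : ℝ :=
  exp (-(exp t * r^2) / (2 * (exp (2 * t) - 1))) /
    (t ^ (s/2 + 1) * (1 - exp (-2 * t)) ^ ((N:ℝ)/2))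

lemma exp_sub_one_le_mul_exp (x : ℝ) : exp x - 1 ≤ x * exp x := by
  have h : (1 - x) * exp x ≤ exp (-x) * exp x :=
    mul_le_mul_of_nonneg_right (by linarith [add_one_le_exp (-x)]) (exp_pos x).le
  rw [← exp_add, neg_add_cancel, exp_zero] at h
  linarith

lemma one_sub_exp_neg_two_mul_nonneg {t : ℝ} (ht : 0 ≤ t) : 0 ≤ 1 - exp (-2 * t) :=
  sub_nonneg.2 (exp_le_one_iff.2 (by linarith))

lemma half_le_one_sub_exp_neg_two_mul {t : ℝ} (ht0 : 0 ≤ t) (ht1 : t ≤ 1) :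
    t / 2 ≤ 1 - exp (-2 * t) := by
  have h : (1 + 2 * t) * exp (-2 * t) ≤ 1 := by
    calc (1 + 2 * t) * exp (-2 * t) ≤ exp (2 * t) * exp (-2 * t) := by
          gcongr; linarith [add_one_le_exp (2 * t)]
      _ = 1 := by rw [← exp_add]; simp
  nlinarith [exp_pos (-2 * t)]

lemma exp_neg_div_le_mul_rpow {c : ℝ} (hc : 0 < c) (α : ℝ) :
    ∃ C, ∀ t ∈ Ioc (0:ℝ) 1, exp (-(c / t)) ≤ C * t ^ α := by
  set k := ⌈α⌉₊
  refine ⟨k.factorial / c ^ k, fun t ⟨ht0, ht1⟩ => ?_⟩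
  have hfac : (c / t) ^ k / k.factorial ≤ exp (c / t) :=
    Real.pow_div_factorial_le_exp _ (by positivity) k
  calc exp (-(c / t)) = (exp (c / t))⁻¹ := exp_neg _
    _ ≤ ((c / t) ^ k / k.factorial)⁻¹ := inv_anti₀ (by positivity) hfac
    _ = k.factorial / c ^ k * t ^ (k:ℝ) := by rw [rpow_natCast, div_pow]; field_simp
    _ ≤ k.factorial / c ^ k * t ^ α :=
      mul_le_mul_of_nonneg_left (rpow_le_rpow_of_exponent_ge ht0 ht1 (Nat.le_ceil α))
        (by positivity)

namespace radKernelIntegrand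

variable {N : ℕ} {s r t : ℝ}

lemma sq_div_le_exponent (ht0 : 0 < t) (ht1 : t ≤ 1) :
    r ^ 2 / (4 * exp 2) / t ≤ exp t * r ^ 2 / (2 * (exp (2 * t) - 1)) := by
  have hpos : 0 < exp (2 * t) - 1 := by linarith [add_one_le_exp (2 * t)]
  have hden : 2 * (exp (2 * t) - 1) ≤ 4 * exp 2 * t := by
    have := exp_le_exp.2 (by linarith : 2 * t ≤ 2)
    nlinarith [exp_sub_one_le_mul_exp (2 * t)]
  rw [div_div]
  exact div_le_div₀ (by positivity) (le_mul_of_one_le_left (sq_nonneg r) (one_le_exp ht0.le))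
    (by positivity) (by linarith)

lemma nonneg (ht : 0 ≤ t) : 0 ≤ radKernelIntegrand N s r t :=
  div_nonneg (exp_pos _).le <| mul_nonneg (rpow_nonneg ht _) <|
    rpow_nonneg (one_sub_exp_neg_two_mul_nonneg ht) _

lemma measurable (N : ℕ) (s : ℝ) : Measurable (Function.uncurry (radKernelIntegrand N s)) := by
  unfold radKernelIntegrand Function.uncurry
  fun_prop

lemma le_of_sq_le {r₀ : ℝ} (ht : 0 < t) (hr : r₀ ^ 2 ≤ r ^ 2) :
    radKernelIntegrand N s r t ≤ radKernelIntegrand N s r₀ t := by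
  have hexp : 0 < exp (2 * t) - 1 := by linarith [add_one_le_exp (2 * t)]
  have hbase := one_sub_exp_neg_two_mul_nonneg ht.le
  unfold radKernelIntegrand
  gcongr

lemma le_of_le_one (ht0 : 0 < t) (ht1 : t ≤ 1) :
    radKernelIntegrand N s r t ≤
      2 ^ ((N:ℝ)/2) * exp (-(r ^ 2 / (4 * exp 2) / t)) / t ^ (s/2 + 1 + N/2) := by
  have hnum :
      exp (-(exp t * r^2) / (2 * (exp (2 * t) - 1))) ≤ exp (-(r ^ 2 / (4 * exp 2) / t)) :=
    exp_le_exp.2 (by rw [neg_div]; exact neg_le_neg (sq_div_le_exponent ht0 ht1))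
  have hden : t ^ (s/2 + 1 + N/2) / 2 ^ ((N:ℝ)/2) ≤
      t ^ (s/2 + 1) * (1 - exp (-2 * t)) ^ ((N:ℝ)/2) := by
    rw [rpow_add ht0, mul_div_assoc, ← div_rpow ht0.le zero_le_two]
    gcongr
    exact half_le_one_sub_exp_neg_two_mul ht0.le ht1
  calc radKernelIntegrand N s r t
      ≤ exp (-(r ^ 2 / (4 * exp 2) / t)) / (t ^ (s/2 + 1 + N/2) / 2 ^ ((N:ℝ)/2)) :=
        div_le_div₀ (exp_pos _).le hnum (by positivity) hden
    _ = _ := by field_simp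

lemma le_of_one_le (ht : 1 ≤ t) :
    radKernelIntegrand N s r t ≤ t ^ (-(s/2 + 1)) / (1 - exp (-2)) ^ ((N:ℝ)/2) := by
  have hc : 0 < 1 - exp (-2) := sub_pos.2 (exp_lt_one_iff.2 (by norm_num))
  have hnum : exp (-(exp t * r^2) / (2 * (exp (2 * t) - 1))) ≤ 1 := by
    refine exp_le_one_iff.2 (div_nonpos_of_nonpos_of_nonneg (neg_nonpos.2 (by positivity)) ?_)
    linarith [one_le_exp (by linarith : 0 ≤ 2 * t)]
  have hden : t ^ (s/2 + 1) * (1 - exp (-2)) ^ ((N:ℝ)/2) ≤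
      t ^ (s/2 + 1) * (1 - exp (-2 * t)) ^ ((N:ℝ)/2) := by
    gcongr
    linarith
  calc radKernelIntegrand N s r t
      ≤ 1 / (t ^ (s/2 + 1) * (1 - exp (-2)) ^ ((N:ℝ)/2)) :=
        div_le_div₀ zero_le_one hnum (by positivity) hden
    _ = _ := by rw [rpow_neg (by linarith)]; field_simp

lemma integrableOn_Ioc (hr : r ≠ 0) :
    IntegrableOn (radKernelIntegrand N s r) (Ioc 0 1) := by
  obtain ⟨C, hC⟩ := exp_neg_div_le_mul_rpow (c := r ^ 2 / (4 * exp 2)) (by positivity)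
    (s/2 + 1 + N/2)
  refine Integrable.mono' (g := fun _ => 2 ^ ((N:ℝ)/2) * C)
    (integrableOn_const measure_Ioc_lt_top.ne)
    (measurable N s).of_uncurry_left.aestronglyMeasurable ?_
  filter_upwards [ae_restrict_mem measurableSet_Ioc] with t ⟨ht0, ht1⟩
  rw [norm_of_nonneg (nonneg ht0.le)]
  calc radKernelIntegrand N s r t
      ≤ 2 ^ ((N:ℝ)/2) * exp (-(r ^ 2 / (4 * exp 2) / t)) / t ^ (s/2 + 1 + N/2) :=
        le_of_le_one ht0 ht1
    _ ≤ 2 ^ ((N:ℝ)/2) * (C * t ^ (s/2 + 1 + N/2)) / t ^ (s/2 + 1 + N/2) := by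
        gcongr
        exact hC t ⟨ht0, ht1⟩
    _ = 2 ^ ((N:ℝ)/2) * C := by field_simp

lemma integrableOn_Ioi_one (hs : 0 < s) :
    IntegrableOn (radKernelIntegrand N s r) (Ioi 1) := by
  have hdom := (integrableOn_Ioi_rpow_of_lt (a := -(s/2 + 1)) (by linarith) one_pos).div_const
    ((1 - exp (-2)) ^ ((N:ℝ)/2))
  refine Integrable.mono' hdom (measurable N s).of_uncurry_left.aestronglyMeasurable ?_
  filter_upwards [ae_restrict_mem measurableSet_Ioi] with t ht
  rw [norm_of_nonneg (nonneg (by linarith [mem_Ioi.1 ht]))]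
  exact le_of_one_le (mem_Ioi.1 ht).le

lemma integrableOn_Ioi (hs : 0 < s) (hr : r ≠ 0) :
    IntegrableOn (radKernelIntegrand N s r) (Ioi 0) := by
  rw [← Ioc_union_Ioi_eq_Ioi zero_le_one]
  exact (integrableOn_Ioc hr).union (integrableOn_Ioi_one hs)

end radKernelIntegrand

namespace radKernel

variable {N : ℕ} {s : ℝ}

lemma nonneg (r : ℝ) : 0 ≤ radKernel N s r :=
  setIntegral_nonneg measurableSet_Ioi fun _ ht => radKernelIntegrand.nonneg (le_of_lt ht)

lemma measurable (N : ℕ) (s : ℝ) : Measurable (radKernel N s) :=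
  ((radKernelIntegrand.measurable N s).stronglyMeasurable.integral_prod_right
    (ν := volume.restrict (Ioi 0))).measurable

lemma antitoneOn (hs : 0 < s) : AntitoneOn (radKernel N s) (Ioi 0) := by
  intro r₀ hr₀ r _ hle
  refine integral_mono_of_nonneg ?_ (radKernelIntegrand.integrableOn_Ioi hs (ne_of_gt hr₀)) ?_
  · filter_upwards [ae_restrict_mem measurableSet_Ioi] with t ht
    exact radKernelIntegrand.nonneg (le_of_lt ht)
  · filter_upwards [ae_restrict_mem measurableSet_Ioi] with t ht
    exact radKernelIntegrand.le_of_sq_le ht (pow_le_pow_left₀ (le_of_lt hr₀) hle 2)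

end radKernel

lemma integrable_exp_neg_mul_sq_norm {V : Type*} [NormedAddCommGroup V] [InnerProductSpace ℝ V]
    [FiniteDimensional ℝ V] [MeasurableSpace V] [BorelSpace V] {b : ℝ} (hb : 0 < b) :
    Integrable (fun v : V => exp (-b * ‖v‖ ^ 2)) := by
  refine (GaussianFourier.integrable_cexp_neg_mul_sq_norm_add (b := b) hb 0 (0 : V)).norm.congr ?_
  filter_upwards with v
  simp [Complex.norm_exp, ← Complex.ofReal_pow]

theorem radKernel_integrable_far (N : ℕ) (a : ℝ) (ha : 0 < a) :
    ∃ Ra : ℝ, 0 < Ra ∧ ∀ s ∈ Set.Ioo (0:ℝ) 1,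
      IntegrableOn (fun x : EuclideanSpace ℝ (Fin N) => radKernel N s ‖x‖ * exp (-a * ‖x‖^2))
        {x : EuclideanSpace ℝ (Fin N) | Ra ≤ ‖x‖} := by
  refine ⟨1, one_pos, fun s hs => ?_⟩
  have hdom := ((integrable_exp_neg_mul_sq_norm ha).const_mul (radKernel N s 1)).integrableOn
    (s := {x : EuclideanSpace ℝ (Fin N) | 1 ≤ ‖x‖})
  refine hdom.mono'
    (((radKernel.measurable N s).comp measurable_norm).mul (by fun_prop)).aestronglyMeasurable ?_
  filter_upwards [ae_restrict_mem (isClosed_le continuous_const continuous_norm).measurableSet]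
    with x hx
  rw [norm_of_nonneg (mul_nonneg (radKernel.nonneg _) (exp_pos _).le)]
  have hK : radKernel N s ‖x‖ ≤ radKernel N s 1 :=
    radKernel.antitoneOn hs.1 (mem_Ioi.2 one_pos) (mem_Ioi.2 (one_pos.trans_le hx)) hx
  exact mul_le_mul_of_nonneg_right hK (exp_pos _).le
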